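/- arXiv:2112.08129 — 2 statements merged into one kernel-verified Lean document; each statement's English description precedes it below -/
import Mathlib

section
/- Let Λ be a ring with a direct sum decomposition Λ = P ⊕ Q as right Λ-modules, and let f : B → P be a right minimal right (add Q)-approximation of P (so B ∈ add Q). Assume that every endomorphism of P that is not an automorphism factors through f, and that every endomorphism u of P with u ∘ f = 0 is zero. Then every endomorphism γ of P* in the homotopy category K(Mod Λ) that is not an isomorphism factors through the chain map π : P* → B[0]; that is, γ = ψ ∘ π for some morphism ψ : B[0] → P* in K(Mod Λ). -/
/-!
A chain endomorphism `g` of `P*` is a commutative square `(g₀, g₁)` over `f`. If `g₁` is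
invertible, a lift `k` of `f ≫ g₁⁻¹` through the approximation `f` satisfies
`(k ≫ g₀) ≫ f = f = (g₀ ≫ k) ≫ f`, so right minimality makes `g₀`, hence `g`, invertible.
Otherwise `g₁ = δ ≫ f`, and `δ : P ⟶ B` is a homotopy from `g` to `π` followed by the map
`B[0] ⟶ P*` given by `g₀ - f ≫ δ`, a chain map because `(g₀ - f ≫ δ) ≫ f = f ≫ g₁ - f ≫ g₁ = 0`.
-/

open CategoryTheory CategoryTheory.Limits

variable {Λ : Type} [Ring Λ]

/-- The category of right `Λ`-modules, as left modules over `Λᵐᵒᵖ`. -/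
abbrev RMod (Λ : Type) [Ring Λ] := ModuleCat Λᵐᵒᵖ

/-- `Λ` as a right module over itself. -/
abbrev regR (Λ : Type) [Ring Λ] : RMod Λ := ModuleCat.of Λᵐᵒᵖ Λ

/-- The graded pieces of a two-term complex concentrated in degrees 0 and 1. -/
def tX (B P : RMod Λ) : ℤ → RMod Λ
  | 0 => B
  | 1 => P
  | _ => ModuleCat.of Λᵐᵒᵖ PUnit

lemma tX0 (B P : RMod Λ) : tX B P 0 = B := rfl
lemma tX1 (B P : RMod Λ) : tX B P 1 = P := rfl

/-- The two-term cochain complex `P*` with `B` in degree 0, `P` in degree 1,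
differential `f`, and zeros elsewhere. -/
def twoTerm {B P : RMod Λ} (f : B ⟶ P) : CochainComplex (RMod Λ) ℤ where
  X := tX B P
  d i j := if h : i = 0 ∧ j = 1 then
      (eqToHom (by rw [h.1, tX0]) : tX B P i ⟶ B) ≫ f ≫
        (eqToHom (by rw [h.2, tX1]) : P ⟶ tX B P j)
    else 0
  shape i j hij := by
    try dsimp only
    rw [dif_neg]
    rintro ⟨rfl, rfl⟩
    exact hij rfl
  d_comp_d' i j k _ _ := by
    try dsimp only
    by_cases h : i = 0 ∧ j = 1
    · obtain ⟨rfl, rfl⟩ := h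
      rw [dif_neg (by rintro ⟨h1, -⟩; exact one_ne_zero h1 : ¬((1:ℤ) = 0 ∧ k = 1)), comp_zero]
    · rw [dif_neg h, zero_comp]

/-- The complex `M[0]`, with `M` concentrated in degree 0. -/
def sgl (M : RMod Λ) : CochainComplex (RMod Λ) ℤ := twoTerm (0 : M ⟶ ModuleCat.of Λᵐᵒᵖ PUnit)

/-- The homotopy category `K(Mod Λ)` of cochain complexes of right `Λ`-modules. -/
abbrev KMod (Λ : Type) [Ring Λ] := HomotopyCategory (RMod Λ) (ComplexShape.up ℤ)

/-- The quotient functor from complexes to the homotopy category. -/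
abbrev Kq : CochainComplex (RMod Λ) ℤ ⥤ KMod Λ := HomotopyCategory.quotient _ _

/-- The chain map `π : P* ⟶ B[0]` given by the identity of `B` in degree 0. -/
def projB {B P : RMod Λ} (f : B ⟶ P) : twoTerm f ⟶ sgl B where
  f i := if h : i = 0 then eqToHom (by rw [h]; rfl) else 0
  comm' i j hij := by
    try dsimp only
    by_cases h : i = 0
    · subst h
      obtain rfl : j = 1 := by simpa using hij.symm
      simp [twoTerm, sgl] <;> first | rfl | exact comp_zero.symm | exact zero_comp.symm
    · rw [dif_neg h, zero_comp]
      have hn : ¬(i = 0 ∧ j = 1) := fun hc => h hc.1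
      simp [twoTerm, dif_neg hn] <;> first | rfl | exact comp_zero.symm | exact zero_comp.symm

/-- The chain map `B[0] ⟶ P[0]` induced by `f : B ⟶ P`. -/
def sglMap {B P : RMod Λ} (f : B ⟶ P) : sgl B ⟶ sgl P where
  f i := if h : i = 0 then eqToHom (by rw [h]; rfl) ≫ f ≫ eqToHom (by rw [h]; rfl) else 0
  comm' i j hij := by
    try dsimp only
    by_cases h : i = 0
    · subst h
      obtain rfl : j = 1 := by simpa using hij.symm
      simp [sgl, twoTerm] <;> first | rfl | exact comp_zero.symm | exact zero_comp.symm
    · rw [dif_neg h, zero_comp]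
      have hn : ¬(i = 0 ∧ j = 1) := fun hc => h hc.1
      simp [sgl, twoTerm, dif_neg hn] <;> first | rfl | exact comp_zero.symm | exact zero_comp.symm

/-- `M` is in `add X`: it is a direct summand of a finite direct sum of copies of `X`. -/
def memAdd (X M : RMod Λ) : Prop :=
  ∃ (t : ℕ) (s : M ⟶ ⨁ (fun _ : Fin t => X)) (r : (⨁ (fun _ : Fin t => X)) ⟶ M),
    s ≫ r = 𝟙 M

/-- `f : B ⟶ P` is a right `add X`-approximation of `P`. -/
def IsRightApprox (X : RMod Λ) {B P : RMod Λ} (f : B ⟶ P) : Prop :=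
  memAdd X B ∧ ∀ B' : RMod Λ, memAdd X B' → ∀ g : B' ⟶ P, ∃ h : B' ⟶ B, h ≫ f = g

/-- `f : B ⟶ P` is right minimal. -/
def RightMinimal {B P : RMod Λ} (f : B ⟶ P) : Prop :=
  ∀ h : B ⟶ B, h ≫ f = f → IsIso h

lemma isIso_of_isIso_comp_of_isIso_comp {C : Type*} [Category C] {X Y : C} (g : X ⟶ Y)
    (k : Y ⟶ X) [IsIso (k ≫ g)] [IsIso (g ≫ k)] : IsIso g :=
  have : Mono g := mono_of_mono g k
  have : IsSplitEpi g := IsSplitEpi.mk' ⟨inv (k ≫ g) ≫ k, by simp⟩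
  isIso_of_mono_of_isSplitEpi g

lemma IsRightApprox.isIso_of_comp_eq_comp {X B P : RMod Λ} {f : B ⟶ P}
    (happrox : IsRightApprox X f) (hmin : RightMinimal f) {g₀ : B ⟶ B} {g₁ : P ⟶ P}
    (hg₁ : IsIso g₁) (comm : g₀ ≫ f = f ≫ g₁) : IsIso g₀ := by
  obtain ⟨k, hk⟩ := happrox.2 B happrox.1 (f ≫ inv g₁)
  have : IsIso (k ≫ g₀) := hmin _ (by simp [comm, reassoc_of% hk])
  have : IsIso (g₀ ≫ k) := hmin _ (by simp [hk, reassoc_of% comm])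
  exact isIso_of_isIso_comp_of_isIso_comp g₀ k

namespace twoTerm

variable {B P B' P' : RMod Λ}

lemma isZero_X (f : B ⟶ P) {i : ℤ} (h₀ : i ≠ 0) (h₁ : i ≠ 1) : IsZero ((twoTerm f).X i) := by
  change IsZero (tX B P i)
  unfold tX
  split
  · exact absurd rfl h₀
  · exact absurd rfl h₁
  · exact ModuleCat.isZero_of_subsingleton _

@[simp] lemma d_zero_one (f : B ⟶ P) : (twoTerm f).d 0 1 = f := by
  simp [twoTerm]
  rfl

lemma d_eq_zero (f : B ⟶ P) {i j : ℤ} (h : ¬(i = 0 ∧ j = 1)) : (twoTerm f).d i j = 0 :=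
  dif_neg h

def homMk (f : B ⟶ P) (f' : B' ⟶ P') (g₀ : B ⟶ B') (g₁ : P ⟶ P') (comm : g₀ ≫ f' = f ≫ g₁) :
    twoTerm f ⟶ twoTerm f' where
  f i := if h₀ : i = 0 then eqToHom (by rw [h₀]; rfl) ≫ g₀ ≫ eqToHom (by rw [h₀]; rfl)
    else if h₁ : i = 1 then eqToHom (by rw [h₁]; rfl) ≫ g₁ ≫ eqToHom (by rw [h₁]; rfl)
    else 0
  comm' i j hij := by
    change i + 1 = j at hij
    subst hij
    by_cases h₀ : i = 0
    · subst h₀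
      change (𝟙 _ ≫ g₀ ≫ 𝟙 _) ≫ f' = f ≫ 𝟙 _ ≫ g₁ ≫ 𝟙 _
      simpa using comm
    · rw [d_eq_zero f (fun h => h₀ h.1), zero_comp]
      by_cases h₁ : i = 1
      · subst h₁
        rw [d_eq_zero f' (by omega), comp_zero]
      · rw [dif_neg h₀, dif_neg h₁, zero_comp]

@[simp] lemma homMk_f_zero (f : B ⟶ P) (f' : B' ⟶ P') (g₀ : B ⟶ B') (g₁ : P ⟶ P')
    (comm : g₀ ≫ f' = f ≫ g₁) : (homMk f f' g₀ g₁ comm).f 0 = g₀ := by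
  simp [homMk]
  rfl

@[simp] lemma homMk_f_one (f : B ⟶ P) (f' : B' ⟶ P') (g₀ : B ⟶ B') (g₁ : P ⟶ P')
    (comm : g₀ ≫ f' = f ≫ g₁) : (homMk f f' g₀ g₁ comm).f 1 = g₁ := by
  simp [homMk]
  rfl

lemma exists_eq_homMk {f : B ⟶ P} {f' : B' ⟶ P'} (g : twoTerm f ⟶ twoTerm f') :
    ∃ (g₀ : B ⟶ B') (g₁ : P ⟶ P') (comm : g₀ ≫ f' = f ≫ g₁), g = homMk f f' g₀ g₁ comm := by
  have comm := g.comm 0 1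
  simp only [d_zero_one] at comm
  refine ⟨g.f 0, g.f 1, comm, ?_⟩
  ext i : 1
  by_cases h₀ : i = 0
  · subst h₀; exact (homMk_f_zero ..).symm
  by_cases h₁ : i = 1
  · subst h₁; exact (homMk_f_one ..).symm
  exact (isZero_X f h₀ h₁).eq_of_src _ _

lemma isIso_homMk {f : B ⟶ P} {f' : B' ⟶ P'} {g₀ : B ⟶ B'} {g₁ : P ⟶ P'}
    (comm : g₀ ≫ f' = f ≫ g₁) [IsIso g₀] [IsIso g₁] : IsIso (homMk f f' g₀ g₁ comm) := by
  have (i : ℤ) : IsIso ((homMk f f' g₀ g₁ comm).f i) := by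
    by_cases h₀ : i = 0
    · subst h₀; rw [homMk_f_zero]; assumption
    by_cases h₁ : i = 1
    · subst h₁; rw [homMk_f_one]; assumption
    exact ⟨⟨0, (isZero_X f h₀ h₁).eq_of_src _ _, (isZero_X f' h₀ h₁).eq_of_src _ _⟩⟩
  exact HomologicalComplex.Hom.isIso_of_components _

def homotopyProjBComp {f : B ⟶ P} {f' : B' ⟶ P'} {g₀ : B ⟶ B'} {g₁ : P ⟶ P'}
    (comm : g₀ ≫ f' = f ≫ g₁) (δ : P ⟶ B') (hδ : δ ≫ f' = g₁) :
    Homotopy (homMk f f' g₀ g₁ comm) (projB f ≫ homMk 0 f' (g₀ - f ≫ δ) 0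
      (by rw [Preadditive.sub_comp, comm, Category.assoc, hδ, sub_self, zero_comp])) where
  hom i j := if h : i = 1 ∧ j = 0 then
      eqToHom (congrArg (twoTerm f).X h.1) ≫ δ ≫ eqToHom (congrArg (twoTerm f').X h.2.symm)
    else 0
  zero i j hij := dif_neg (by rintro ⟨rfl, rfl⟩; exact hij rfl)
  comm i := by
    by_cases h₀ : i = 0
    · subst h₀
      rw [dNext_eq _ (show (ComplexShape.up ℤ).Rel 0 1 by simp),
        prevD_eq _ (show (ComplexShape.up ℤ).Rel (-1) 0 by simp), dif_pos ⟨rfl, rfl⟩,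
        dif_neg (by norm_num)]
      change g₀ = (f ≫ 𝟙 P ≫ δ ≫ 𝟙 B' + 0 + 𝟙 B ≫ (g₀ - f ≫ δ) : B ⟶ B')
      simp
    by_cases h₁ : i = 1
    · subst h₁
      rw [dNext_eq _ (show (ComplexShape.up ℤ).Rel 1 2 by simp),
        prevD_eq _ (show (ComplexShape.up ℤ).Rel 0 1 by simp),
        d_eq_zero f (i := 1) (j := 2) (by norm_num), zero_comp, dif_pos ⟨rfl, rfl⟩]
      change g₁ = (0 + (𝟙 P ≫ δ ≫ 𝟙 B') ≫ f' + 0 : P ⟶ P')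
      simp [hδ]
    · exact (isZero_X f h₀ h₁).eq_of_src _ _

end twoTerm

theorem nonIso_endo_factors_through_approximation_general
    (Λ : Type) [Ring Λ] (P Q B : RMod Λ)
    (f : B ⟶ P) (happrox : IsRightApprox Q f) (hmin : RightMinimal f)
    (hfact : ∀ β : P ⟶ P, ¬ IsIso β → ∃ δ : P ⟶ B, δ ≫ f = β) :
    ∀ γ : (Kq).obj (twoTerm f) ⟶ (Kq).obj (twoTerm f), ¬ IsIso γ →
      ∃ ψ : (Kq).obj (sgl B) ⟶ (Kq).obj (twoTerm f), γ = (Kq).map (projB f) ≫ ψ := by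
  intro γ hγ
  obtain ⟨g, rfl⟩ := (Kq).map_surjective γ
  obtain ⟨g₀, g₁, comm, rfl⟩ := twoTerm.exists_eq_homMk g
  by_cases h₁ : IsIso g₁
  · have : IsIso g₀ := happrox.isIso_of_comp_eq_comp hmin h₁ comm
    have := twoTerm.isIso_homMk comm
    exact (hγ inferInstance).elim
  · obtain ⟨δ, hδ⟩ := hfact g₁ h₁
    exact ⟨_, (HomotopyCategory.eq_of_homotopy _ _ (twoTerm.homotopyProjBComp comm δ hδ)).trans
      ((Kq).map_comp _ _)⟩

/-- Let `Λ = P ⊕ Q` as right `Λ`-modules and let `f : B ⟶ P` be a right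
minimal right `add Q`-approximation of `P`. Assume every endomorphism of `P` which is not an
automorphism factors through `f`, and every endomorphism `u` of `P` with `u ∘ f = 0` is zero.
Then every non-isomorphism endomorphism `γ` of `P*` in `K(Mod Λ)` factors through
`π : P* ⟶ B[0]`. -/
theorem nonIso_endo_factors_through_approximation
    (Λ : Type) [Ring Λ] (P Q B : RMod Λ)
    (decomp : regR Λ ≅ P ⊞ Q)
    (f : B ⟶ P) (happrox : IsRightApprox Q f) (hmin : RightMinimal f)
    (hfact : ∀ β : P ⟶ P, ¬ IsIso β → ∃ δ : P ⟶ B, δ ≫ f = β)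
    (hvanish : ∀ u : P ⟶ P, f ≫ u = 0 → u = 0) :
    ∀ γ : (Kq).obj (twoTerm f) ⟶ (Kq).obj (twoTerm f), ¬ IsIso γ →
      ∃ ψ : (Kq).obj (sgl B) ⟶ (Kq).obj (twoTerm f), γ = (Kq).map (projB f) ≫ ψ :=
  nonIso_endo_factors_through_approximation_general Λ P Q B f happrox hmin hfact
end

section
/- Let Λ be a ring and f : B → P a right minimal morphism of right Λ-modules such that every Λ-linear morphism B → P factors through f. Suppose δ : B → B and β : P → P are Λ-linear maps satisfying β ∘ f = f ∘ δ. If β is an isomorphism, then δ is an isomorphism. -/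
open CategoryTheory

/-- Let `f : B ⟶ P` be a right minimal morphism of right `Λ`-modules such
that every morphism `B ⟶ P` factors through `f`. If `δ : B ⟶ B` and `β : P ⟶ P` satisfy
`β ∘ f = f ∘ δ` and `β` is an isomorphism, then `δ` is an isomorphism. -/
theorem rightMinimal_conjugate_isIso
    (Λ : Type) [Ring Λ] (B P : RMod Λ) (f : B ⟶ P)
    (hmin : ∀ h : B ⟶ B, h ≫ f = f → IsIso h)
    (hfact : ∀ g : B ⟶ P, ∃ h : B ⟶ B, h ≫ f = g)
    (δ : B ⟶ B) (β : P ⟶ P)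
    (hcomm : f ≫ β = δ ≫ f) (hβ : IsIso β) :
    IsIso δ := by
  obtain ⟨h, hh⟩ := hfact (f ≫ inv β)
  have h1 : (δ ≫ h) ≫ f = f := by
    rw [Category.assoc, hh, ← Category.assoc, ← hcomm, Category.assoc,
      IsIso.hom_inv_id, Category.comp_id]
  have h2 : (h ≫ δ) ≫ f = f := by
    rw [Category.assoc, ← hcomm, ← Category.assoc, hh, Category.assoc,
      IsIso.inv_hom_id, Category.comp_id]
  have i1 : IsIso (δ ≫ h) := hmin _ h1
  have i2 : IsIso (h ≫ δ) := hmin _ h2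
  have mono : Mono δ := by
    constructor
    intro Z g1 g2 hg
    have := congrArg (· ≫ h) hg
    simp only [Category.assoc] at this
    exact (cancel_mono (δ ≫ h)).mp (by simpa [Category.assoc] using this)
  have epi : Epi δ := by
    constructor
    intro Z g1 g2 hg
    have : (h ≫ δ) ≫ g1 = (h ≫ δ) ≫ g2 := by
      simp only [Category.assoc, hg]
    exact (cancel_epi (h ≫ δ)).mp this
  exact isIso_of_mono_of_epi δ
end
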